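/- (AMDCT VII discrete orthogonality) Let N, n ≥ 1 and let k, k' ∈ D_N^−, i.e., integer vectors with N−1 ≥ k_1 > … > k_n ≥ 0 and N−1 ≥ k'_1 > … > k'_n ≥ 0. Then Σ_{r ∈ D_N^−} (∏_{i=1}^n c_{r_i}) · cos⁻_{k+ρ}(2r_1/(2N−1), …, 2r_n/(2N−1)) · cos⁻_{k'+ρ}(2r_1/(2N−1), …, 2r_n/(2N−1)) = (d̃_k)^{−1} · ((2N−1)/4)^n · δ_{k,k'}, where ρ = (1/2,…,1/2). -/

import Mathlib

open Real Finset

/-- The antisymmetric multivariate cosine function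
`cos⁻_λ(x) = Σ_{σ ∈ S_n} sgn(σ) ∏_{i=1}^n cos(π λ_{σ(i)} x_i)`. -/
noncomputable def cosMinus (n : ℕ) (lam x : Fin n → ℝ) : ℝ :=
  ∑ σ : Equiv.Perm (Fin n),
    ((Equiv.Perm.sign σ : ℤ) : ℝ) * ∏ i : Fin n, Real.cos (Real.pi * lam (σ i) * x i)

/-- The coefficient `c_r`: `1/2` if `r = 0` or `r = N`, and `1` otherwise. -/
noncomputable def cc (N r : ℕ) : ℝ := if r = 0 ∨ r = N then 1 / 2 else 1

/-!
The summand is invariant under permuting the entries of `r` (both antisymmetric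
cosines change by the same sign) and vanishes when two entries coincide, so the sum over
decreasing `r` is `1/n!` times the sum over all `r`. Expanding both alternating sums, that full
sum factorises into `n!` times the determinant of the weighted Gram matrix
`(∑ₛ c_s cos(π(k_i+½)·2s/(2N-1)) cos(π(k'_j+½)·2s/(2N-1)))_{ij}`, a weighted Cauchy–Binet formula.
By product-to-sum, each entry is a sum of two half-period cosine sums; folding the full period
`2N - 1` with `r ↦ 2N - 1 - r` reduces these to sums of roots of unity, which gives the
one-dimensional orthogonality `δ_{ab} (2N-1)/(4 c_{a+1})`. The Gram matrix is thus diagonal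
when `k = k'` and has a zero row otherwise.
-/

theorem sum_range_cos_two_pi_mul_div {M : ℕ} (hM : M ≠ 0) (m : ℤ) :
    ∑ r ∈ range M, cos (2 * π * m * r / M) = if (M : ℤ) ∣ m then (M : ℝ) else 0 := by
  set ζ := Complex.exp (2 * π * Complex.I / M)
  have hζ : IsPrimitiveRoot ζ M := Complex.isPrimitiveRoot_exp M hM
  have hpow : ∀ r : ℕ, (ζ ^ m) ^ r = Complex.exp ((2 * π * m * r / M : ℝ) * Complex.I) := by
    intro r
    rw [← zpow_natCast, ← zpow_mul, ← Complex.exp_int_mul]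
    push_cast
    ring_nf
  have hsum : ∑ r ∈ range M, cos (2 * π * m * r / M) = (∑ r ∈ range M, (ζ ^ m) ^ r).re := by
    simp only [Complex.re_sum, hpow, Complex.exp_ofReal_mul_I_re]
  rw [hsum]
  split_ifs with hdvd
  · simp [(hζ.zpow_eq_one_iff_dvd m).2 hdvd]
  · have hz1 : ζ ^ m ≠ 1 := fun h => hdvd ((hζ.zpow_eq_one_iff_dvd m).1 h)
    have hzM : (ζ ^ m) ^ M = 1 := by
      rw [← zpow_natCast, ← zpow_mul, mul_comm, zpow_mul, zpow_natCast, hζ.pow_eq_one,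
        one_zpow]
    simp [geom_sum_eq hz1, hzM]

theorem sum_range_add_apply_zero_of_reflect {R : Type*} [AddCommMonoid R] (f : ℕ → R) (K : ℕ)
    (hf : ∀ r ≤ 2 * K + 1, f (2 * K + 1 - r) = f r) :
    ∑ r ∈ range (2 * K + 1), f r + f 0 = 2 • ∑ r ∈ range (K + 1), f r := by
  have htail : ∑ r ∈ range K, f (K + 1 + r) = ∑ r ∈ range K, f (r + 1) := by
    rw [← sum_range_reflect]
    refine sum_congr rfl fun r hr => ?_
    have hr := mem_range.1 hr
    rw [← hf _ (by omega)]
    congr 1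
    omega
  rw [show 2 * K + 1 = (K + 1) + K by ring, sum_range_add, htail, add_assoc,
    ← sum_range_succ' f K, two_nsmul]

theorem sum_range_cc_mul_apply {N : ℕ} (hN : N ≠ 0) (f : ℕ → ℝ) :
    ∑ r ∈ range N, cc N r * f r = ∑ r ∈ range N, f r - f 0 / 2 := by
  obtain ⟨K, rfl⟩ := Nat.exists_eq_add_one_of_ne_zero hN
  have hcc : ∀ r ∈ range K, cc (K + 1) (r + 1) = 1 := fun r hr => by
    simp only [cc, if_neg (show ¬(r + 1 = 0 ∨ r + 1 = K + 1) by simp at hr; omega)]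
  rw [sum_range_succ', sum_range_succ', sum_congr rfl fun r hr => by rw [hcc r hr, one_mul]]
  rw [show cc (K + 1) 0 = 1 / 2 by simp [cc]]
  ring

theorem sum_range_cc_mul_cos {N : ℕ} (hN : N ≠ 0) (m : ℤ) :
    ∑ r ∈ range N, cc N r * cos (2 * π * m * r / (2 * N - 1)) =
      if (2 * N - 1 : ℤ) ∣ m then (2 * N - 1 : ℝ) / 2 else 0 := by
  obtain ⟨K, rfl⟩ := Nat.exists_eq_add_one_of_ne_zero hN
  have hM : ((2 * K + 1 : ℕ) : ℝ) = 2 * ((K + 1 : ℕ) : ℝ) - 1 := by push_cast; ring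
  have hMz : ((2 * K + 1 : ℕ) : ℤ) = 2 * ((K + 1 : ℕ) : ℤ) - 1 := by push_cast; ring
  have hfold := sum_range_add_apply_zero_of_reflect
    (fun r : ℕ => cos (2 * π * m * r / (2 * K + 1 : ℕ))) K fun r hr => by
      rw [Nat.cast_sub hr, mul_sub, sub_div, mul_div_assoc, div_self (by positivity), mul_one,
        show 2 * π * m = m * (2 * π) by ring, cos_int_mul_two_pi_sub]
  have hfourier := sum_range_cos_two_pi_mul_div (M := 2 * K + 1) (by omega) m
  rw [sum_range_cc_mul_apply hN]
  rw [hM] at hfold hfourier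
  rw [hMz] at hfourier
  simp only [Nat.cast_zero, mul_zero, zero_div, cos_zero, two_nsmul] at hfold ⊢
  split_ifs at hfourier ⊢ <;> linarith

theorem sum_range_cos_mul_cc_mul_cos {N a b : ℕ} (ha : a < N) (hb : b < N) :
    ∑ s ∈ range N, cos (π * (a + 1 / 2) * (2 * s / (2 * N - 1))) * cc N s *
        cos (π * (b + 1 / 2) * (2 * s / (2 * N - 1))) =
      if a = b then (cc N (a + 1))⁻¹ * ((2 * N - 1) / 4) else 0 := by
  have hN : N ≠ 0 := by omega
  have hprod : ∀ s : ℕ, cos (π * (a + 1 / 2) * (2 * s / (2 * N - 1))) * cc N s *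
        cos (π * (b + 1 / 2) * (2 * s / (2 * N - 1))) =
      (cc N s * cos (2 * π * ((a - b : ℤ) : ℝ) * s / (2 * N - 1)) +
        cc N s * cos (2 * π * ((a + b + 1 : ℤ) : ℝ) * s / (2 * N - 1))) / 2 := fun s => by
    have h := two_mul_cos_mul_cos (π * (a + 1 / 2) * (2 * s / (2 * N - 1)))
      (π * (b + 1 / 2) * (2 * s / (2 * N - 1)))
    have hsub : π * (a + 1 / 2) * (2 * s / (2 * N - 1)) - π * (b + 1 / 2) * (2 * s / (2 * N - 1))
        = 2 * π * ((a - b : ℤ) : ℝ) * s / (2 * N - 1) := by push_cast; ring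
    have hadd : π * (a + 1 / 2) * (2 * s / (2 * N - 1)) + π * (b + 1 / 2) * (2 * s / (2 * N - 1))
        = 2 * π * ((a + b + 1 : ℤ) : ℝ) * s / (2 * N - 1) := by push_cast; ring
    rw [hsub, hadd] at h
    linear_combination (cc N s / 2) * h
  have hdvd_sub : (2 * N - 1 : ℤ) ∣ (a - b : ℤ) ↔ a = b := by
    refine ⟨fun h => ?_, fun h => by simp [h]⟩
    have := Int.eq_zero_of_abs_lt_dvd h (by rw [abs_lt]; omega)
    omega
  have hdvd_add : (2 * N - 1 : ℤ) ∣ (a + b + 1 : ℤ) ↔ a = b ∧ a + 1 = N := by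
    refine ⟨fun h => ?_, fun _ => ⟨1, by omega⟩⟩
    have := Int.le_of_dvd (by omega) h
    omega
  have hcc : cc N (a + 1) = if a + 1 = N then 1 / 2 else 1 := by simp [cc]
  rw [sum_congr rfl fun s _ => hprod s, ← sum_div, sum_add_distrib, sum_range_cc_mul_cos hN,
    sum_range_cc_mul_cos hN]
  simp only [hdvd_sub, hdvd_add, hcc]
  by_cases hab : a = b
  · subst hab
    by_cases haN : a + 1 = N <;> simp [haN] <;> ring
  · simp [hab]

open Matrix Equiv

theorem Function.Injective.exists_perm_strictAnti_comp {n : ℕ} {α : Type*} [LinearOrder α]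
    {g : Fin n → α} (hg : Function.Injective g) : ∃ σ : Perm (Fin n), StrictAnti (g ∘ σ) := by
  refine ⟨Tuple.sort g * Fin.revPerm, ?_⟩
  exact ((Tuple.monotone_sort g).strictMono_of_injective
    (hg.comp (Equiv.injective _))).comp_strictAnti Fin.rev_strictAnti

theorem sum_eq_factorial_smul_sum_strictAnti {n : ℕ} {α β : Type*} [Fintype α] [LinearOrder α]
    [AddCommMonoid β] (G : (Fin n → α) → β) (hperm : ∀ r (σ : Perm (Fin n)), G (r ∘ σ) = G r)
    (hzero : ∀ r, ¬Function.Injective r → G r = 0) :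
    ∑ r, G r = n.factorial • ∑ r with StrictAnti r, G r := by
  calc ∑ r, G r = ∑ r with Function.Injective r, G r :=
        (sum_filter_of_ne fun r _ h => by_contra fun hr => h (hzero r hr)).symm
    _ = ∑ p ∈ (univ.filter fun r : Fin n → α => StrictAnti r) ×ˢ (univ : Finset (Perm _)),
          G (p.1 ∘ p.2) := by
      refine (sum_nbij (fun p : (Fin n → α) × Perm (Fin n) => p.1 ∘ p.2)
        (fun p hp => ?_) ?_ ?_ fun _ _ => rfl).symm
      · simp only [mem_product, mem_filter] at hp ⊢
        exact ⟨mem_univ _, hp.1.2.injective.comp p.2.injective⟩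
      · rintro ⟨r, σ⟩ hp ⟨r', σ'⟩ hp' h
        simp only [coe_product, coe_filter, Set.mem_prod, Set.mem_ofPred_eq] at hp hp' h
        have hr : r = r' := (hp.1.2.range_inj hp'.1.2).1 <| by
          rw [← EquivLike.range_comp r σ, ← EquivLike.range_comp r' σ', h]
        subst hr
        simp [DFunLike.coe_injective (hp.1.2.injective.comp_left h)]
      · intro g hg
        simp only [coe_filter, Set.mem_ofPred_eq, mem_univ, true_and] at hg
        obtain ⟨σ, hσ⟩ := hg.exists_perm_strictAnti_comp
        exact ⟨(g ∘ σ, σ⁻¹), by simpa using hσ, by ext; simp⟩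
    _ = n.factorial • ∑ r with StrictAnti r, G r := by
      simp [sum_product, hperm, smul_sum, Fintype.card_perm]

theorem sum_prod_mul_det_submatrix_mul_det_submatrix {m ι R : Type*} [Fintype m]
    [DecidableEq m] [Fintype ι] [DecidableEq ι] [CommRing R] (A B : Matrix m ι R) (w : ι → R) :
    ∑ r : m → ι, (∏ i, w (r i)) * (A.submatrix id r).det * (B.submatrix id r).det =
      (Fintype.card m).factorial • (A * diagonal w * Bᵀ).det := by
  set P := A * diagonal w * Bᵀ with hP
  have hentry : ∀ p q, P p q = ∑ s, A p s * w s * B q s := fun p q => by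
    simp only [hP, mul_apply (M := A * diagonal w), mul_diagonal, transpose_apply]
  have hrow : ∀ σ : Perm m, ∑ τ : Perm m, (Perm.sign τ : R) * ∏ q, P (σ q) (τ q) =
      Perm.sign σ * P.det := fun σ => by
    rw [← det_permute, ← det_transpose, det_apply']
    rfl
  calc ∑ r : m → ι, (∏ i, w (r i)) * (A.submatrix id r).det * (B.submatrix id r).det
      = ∑ σ : Perm m, ∑ τ : Perm m, (Perm.sign σ : R) * Perm.sign τ *
          ∑ r : m → ι, ∏ q, (A (σ q) (r q) * w (r q) * B (τ q) (r q)) := by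
        simp only [det_apply', submatrix_apply, id, mul_assoc, sum_mul_sum]
        simp only [mul_sum]
        rw [sum_comm]
        refine sum_congr rfl fun σ _ => ?_
        rw [sum_comm]
        refine sum_congr rfl fun τ _ => sum_congr rfl fun r _ => ?_
        simp only [prod_mul_distrib]
        ring
    _ = ∑ σ : Perm m, (Perm.sign σ : R) *
          ∑ τ : Perm m, (Perm.sign τ : R) * ∏ q, P (σ q) (τ q) := by
        simp only [hentry, Fintype.prod_sum, mul_sum, mul_assoc]
    _ = (Fintype.card m).factorial • P.det := by
        simp only [hrow, ← mul_assoc, ← Int.cast_mul, ← Units.val_mul, Int.units_mul_self]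
        simp [Fintype.card_perm]

theorem sum_strictAnti_prod_mul_det_submatrix_mul_det_submatrix {n : ℕ} {ι R : Type*}
    [Fintype ι] [LinearOrder ι] [CommRing R] [IsAddTorsionFree R] (A B : Matrix (Fin n) ι R)
    (w : ι → R) :
    ∑ r with StrictAnti r, (∏ i, w (r i)) * (A.submatrix id r).det * (B.submatrix id r).det =
      (A * diagonal w * Bᵀ).det := by
  set G : (Fin n → ι) → R := fun r =>
    (∏ i, w (r i)) * (A.submatrix id r).det * (B.submatrix id r).det
  have hperm : ∀ r (σ : Perm (Fin n)), G (r ∘ σ) = G r := by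
    intro r σ
    have hsign : ((Perm.sign σ : ℤ) : R) * (Perm.sign σ : ℤ) = 1 := by
      rw [← Int.cast_mul, ← Units.val_mul, Int.units_mul_self, Units.val_one, Int.cast_one]
    have hdet : ∀ M : Matrix (Fin n) ι R,
        (M.submatrix id (r ∘ σ)).det = Perm.sign σ * (M.submatrix id r).det :=
      fun M => det_permute' σ (M.submatrix id r)
    simp only [G, Function.comp_apply, Equiv.prod_comp σ fun i => w (r i), hdet]
    linear_combination (∏ i, w (r i)) * (A.submatrix id r).det * (B.submatrix id r).det * hsign
  have hzero : ∀ r, ¬Function.Injective r → G r = 0 := by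
    intro r hr
    obtain ⟨i, j, hrij, hij⟩ := Function.not_injective_iff.1 hr
    have hA : (A.submatrix id r).det = 0 := det_zero_of_column_eq hij fun p => by simp [hrij]
    simp only [G, hA, mul_zero, zero_mul]
  apply nsmul_right_injective (Nat.factorial_ne_zero n)
  simp only
  rw [← sum_eq_factorial_smul_sum_strictAnti G hperm hzero,
    sum_prod_mul_det_submatrix_mul_det_submatrix, Fintype.card_fin]

theorem det_of_ite_eq_of_strictAnti {n : ℕ} {α R : Type*} [LinearOrder α] [CommRing R]
    {k k' : Fin n → α} (hk : StrictAnti k) (hk' : StrictAnti k') (d : α → R) :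
    (of fun i j => if k i = k' j then d (k i) else 0).det =
      if k = k' then ∏ i, d (k i) else 0 := by
  split_ifs with hkk'
  · subst hkk'
    have hdiag : (of fun i j => if k i = k j then d (k i) else 0) = diagonal fun i => d (k i) := by
      ext i j
      simp [diagonal_apply, hk.injective.eq_iff]
    rw [hdiag, det_diagonal]
  · obtain ⟨i, hi⟩ : ∃ i, ∀ j, k i ≠ k' j := by
      by_contra! hsub
      choose φ hφ using hsub
      have hφ_inj : Function.Injective φ := fun a b hab => hk.injective <| by rw [hφ, hφ, hab]
      have hrange : Set.range k = Set.range k' := by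
        rw [← (Finite.injective_iff_surjective.1 hφ_inj).range_comp k', funext hφ]
        rfl
      exact hkk' ((hk.range_inj hk').1 hrange)
    exact det_eq_zero_of_row_eq_zero i fun j => by simp [hi j]

theorem cosMinus_eq_det (n : ℕ) (lam x : Fin n → ℝ) :
    cosMinus n lam x = (of fun p q => cos (π * lam p * x q)).det := by
  simp [cosMinus, det_apply']

theorem AMDCT_VII_orthogonality_general (n N : ℕ) (hN : 1 ≤ N)
    (k k' : Fin n → ℕ)
    (hk : ∀ i j : Fin n, i < j → k j < k i) (hkb : ∀ i, k i ≤ N - 1)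
    (hk' : ∀ i j : Fin n, i < j → k' j < k' i) (hk'b : ∀ i, k' i ≤ N - 1) :
    ∑ r ∈ Finset.univ.filter
        (fun r : Fin n → Fin N => ∀ i j : Fin n, i < j → (r j : ℕ) < (r i : ℕ)),
      (∏ i : Fin n, cc N (r i)) *
        cosMinus n (fun i => (k i : ℝ) + 1 / 2)
          (fun i => 2 * ((r i : ℕ) : ℝ) / (2 * N - 1)) *
        cosMinus n (fun i => (k' i : ℝ) + 1 / 2)
          (fun i => 2 * ((r i : ℕ) : ℝ) / (2 * N - 1))
      = (∏ i : Fin n, cc N (k i + 1))⁻¹ * ((2 * (N : ℝ) - 1) / 4) ^ n *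
          (if k = k' then (1 : ℝ) else 0) := by
  set C : (Fin n → ℕ) → Matrix (Fin n) (Fin N) ℝ := fun κ =>
    of fun p s => cos (π * ((κ p : ℝ) + 1 / 2) * (2 * ((s : ℕ) : ℝ) / (2 * N - 1)))
  have hgram : C k * diagonal (fun s : Fin N => cc N s) * (C k')ᵀ =
      of fun i j => if k i = k' j then (cc N (k i + 1))⁻¹ * ((2 * N - 1) / 4) else 0 := by
    ext i j
    rw [mul_apply]
    simp only [mul_diagonal, transpose_apply, of_apply, C]
    rw [Fin.sum_univ_eq_sum_range (fun s =>
      cos (π * ((k i : ℝ) + 1 / 2) * (2 * (s : ℝ) / (2 * N - 1))) * cc N s *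
        cos (π * ((k' j : ℝ) + 1 / 2) * (2 * (s : ℝ) / (2 * N - 1)))) N]
    exact sum_range_cos_mul_cc_mul_cos (by have := hkb i; omega) (by have := hk'b j; omega)
  have hdet := det_of_ite_eq_of_strictAnti hk hk' fun a => (cc N (a + 1))⁻¹ * ((2 * N - 1) / 4)
  calc _ = ∑ r : Fin n → Fin N with StrictAnti r,
        (∏ i, cc N (r i)) * ((C k).submatrix id r).det * ((C k').submatrix id r).det := by
        simp only [cosMinus_eq_det]
        rfl
    _ = (C k * diagonal (fun s : Fin N => cc N s) * (C k')ᵀ).det :=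
      sum_strictAnti_prod_mul_det_submatrix_mul_det_submatrix (C k) (C k') fun s => cc N s
    _ = _ := by
      rw [hgram, hdet]
      split_ifs
      · rw [prod_mul_distrib, prod_inv_distrib, prod_const, card_univ, Fintype.card_fin, mul_one]
      · simp

theorem AMDCT_VII_orthogonality (n N : ℕ) (hn : 1 ≤ n) (hN : 1 ≤ N)
    (k k' : Fin n → ℕ)
    (hk : ∀ i j : Fin n, i < j → k j < k i) (hkb : ∀ i, k i ≤ N - 1)
    (hk' : ∀ i j : Fin n, i < j → k' j < k' i) (hk'b : ∀ i, k' i ≤ N - 1) :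
    ∑ r ∈ Finset.univ.filter
        (fun r : Fin n → Fin N => ∀ i j : Fin n, i < j → (r j : ℕ) < (r i : ℕ)),
      (∏ i : Fin n, cc N (r i)) *
        cosMinus n (fun i => (k i : ℝ) + 1 / 2)
          (fun i => 2 * ((r i : ℕ) : ℝ) / (2 * N - 1)) *
        cosMinus n (fun i => (k' i : ℝ) + 1 / 2)
          (fun i => 2 * ((r i : ℕ) : ℝ) / (2 * N - 1))
      = (∏ i : Fin n, cc N (k i + 1))⁻¹ * ((2 * (N : ℝ) - 1) / 4) ^ n *
          (if k = k' then (1 : ℝ) else 0) :=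
  AMDCT_VII_orthogonality_general n N hN k k' hk hkb hk' hk'b
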